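/- Let (X, μ) be a measure space, q₁ < q < q₂ finite exponents in [1, ∞), and F : X → [0, ∞) measurable. Suppose F ≤ G + H pointwise where ∫ G^{q₁} dμ ≤ C₁^{q₁} · 2^{N q₁ (1/q₁ - 1/q)} and ∫ H^{q₂} dμ ≤ C₂^{q₂} · 2^{-N q₂ (1/q - 1/q₂)} for every N ∈ ℤ (with G, H allowed to depend on N). Then F belongs to weak L^q, i.e., sup_{λ>0} λ · μ{F > λ}^{1/q} ≤ C for a constant C depending only on C₁, C₂, q, q₁, q₂. -/

import Mathlib

/-!
Since `F ≤ G + H`, the set `{F > λ}` is covered by `{G ≥ λ/2} ∪ {H ≥ λ/2}`, and Chebyshev's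
inequality in `L^{q₁}` and `L^{q₂}` gives
`λ^q μ{F > λ} ≤ 2^{q₁} λ^{q-q₁} ∫ G^{q₁} + 2^{q₂} λ^{q-q₂} ∫ H^{q₂}`.
Choosing `N` with `2^N ≤ λ^{-q} < 2^{N+1}` balances the two hypotheses against these powers of `λ`:
`λ^{q-q₁} 2^{N(1-q₁/q)} ≤ 1` and `λ^{q-q₂} 2^{-N(q₂/q-1)} ≤ 2^{q₂/q-1}`,
so `λ^q μ{F > λ}` is bounded independently of `λ`.
-/

open MeasureTheory ENNReal

namespace ENNReal

lemma exists_mul_two_zpow_le_one_and_inv_mul_two_zpow_neg_le_two {x : ℝ≥0∞} (hx₀ : x ≠ 0)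
    (hx : x ≠ ∞) : ∃ N : ℤ, x * 2 ^ N ≤ 1 ∧ x⁻¹ * 2 ^ (-N) ≤ 2 := by
  obtain ⟨N, hle, hlt⟩ :=
    exists_mem_Ico_zpow (ENNReal.inv_ne_zero.2 hx) (inv_ne_top.2 hx₀) one_lt_two ofNat_ne_top
  refine ⟨N, ?_, ?_⟩
  · calc x * 2 ^ N ≤ x * x⁻¹ := by gcongr
      _ = 1 := ENNReal.mul_inv_cancel hx₀ hx
  · calc x⁻¹ * 2 ^ (-N) ≤ 2 ^ (N + 1) * 2 ^ (-N) := by gcongr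
      _ = 2 := by
        rw [← ENNReal.zpow_add two_ne_zero ofNat_ne_top, add_neg_cancel_comm, zpow_one]

lemma rpow_mul_mul_two_rpow_le_rpow {x A : ℝ≥0∞} {q s : ℝ} {N : ℤ} (h : x ^ q * 2 ^ N ≤ A)
    (hs : 0 ≤ s) : x ^ (q * s) * 2 ^ ((N : ℝ) * s) ≤ A ^ s := by
  rw [rpow_mul, rpow_intCast_mul, ← mul_rpow_of_nonneg _ _ hs]
  gcongr

lemma mul_rpow_one_div_le_of_rpow_mul_le {a b K : ℝ≥0∞} {q : ℝ} (hq : 0 < q)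
    (h : a ^ q * b ≤ K) : a * b ^ (1 / q) ≤ K ^ (1 / q) := by
  calc a * b ^ (1 / q) = (a ^ q * b) ^ (1 / q) := by
        rw [mul_rpow_of_nonneg _ _ (by positivity), ← rpow_mul, mul_one_div_cancel hq.ne',
          rpow_one]
    _ ≤ K ^ (1 / q) := by gcongr

end ENNReal

section WeakType

variable {X : Type*} [MeasurableSpace X] {μ : Measure X}

lemma mul_meas_ge_le_lintegral_rpow {f : X → ℝ≥0∞} (hf : Measurable f) {p : ℝ} (hp : 0 < p)
    (c : ℝ≥0∞) : c ^ p * μ {x | c ≤ f x} ≤ ∫⁻ x, f x ^ p ∂μ := by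
  simpa only [ENNReal.rpow_le_rpow_iff hp] using
    mul_meas_ge_le_lintegral (μ := μ) (hf.pow_const p) (c ^ p)

lemma meas_gt_le_add_meas_ge_half {F G H : X → ℝ≥0∞} (hFGH : ∀ x, F x ≤ G x + H x)
    (c : ℝ≥0∞) : μ {x | c < F x} ≤ μ {x | c / 2 ≤ G x} + μ {x | c / 2 ≤ H x} := by
  refine (measure_mono fun x hx ↦ ?_).trans (measure_union_le _ _)
  by_contra! hx'
  simp only [Set.mem_union, Set.mem_ofPred_eq, not_or, not_le] at hx hx'
  exact (hFGH x).not_gt <| hx.trans_le' <|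
    (ENNReal.add_lt_add hx'.1 hx'.2).le.trans (ENNReal.add_halves c).le

lemma rpow_mul_meas_ge_half_le {f : X → ℝ≥0∞} (hf : Measurable f) {c : ℝ≥0∞} (hc₀ : c ≠ 0)
    (hc : c ≠ ∞) {p : ℝ} (hp : 0 < p) (q : ℝ) :
    c ^ q * μ {x | c / 2 ≤ f x} ≤ 2 ^ p * (c ^ (q - p) * ∫⁻ x, f x ^ p ∂μ) := by
  have hsplit : c ^ q = 2 ^ p * c ^ (q - p) * (c / 2) ^ p := by
    rw [ENNReal.div_rpow_of_nonneg _ _ hp.le, mul_assoc, ← mul_div_assoc,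
      ← ENNReal.rpow_add _ _ hc₀ hc, sub_add_cancel,
      ENNReal.mul_div_cancel (by positivity) (by simp)]
  calc c ^ q * μ {x | c / 2 ≤ f x}
      = 2 ^ p * (c ^ (q - p) * ((c / 2) ^ p * μ {x | c / 2 ≤ f x})) := by
        rw [hsplit, mul_assoc, mul_assoc]
    _ ≤ 2 ^ p * (c ^ (q - p) * ∫⁻ x, f x ^ p ∂μ) := by
        gcongr
        exact mul_meas_ge_le_lintegral_rpow hf hp _

lemma rpow_mul_meas_gt_le_of_le_add {F G H : X → ℝ≥0∞} (hG : Measurable G) (hH : Measurable H)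
    (hFGH : ∀ x, F x ≤ G x + H x) {c : ℝ≥0∞} (hc₀ : c ≠ 0) (hc : c ≠ ∞) {p₁ p₂ : ℝ}
    (hp₁ : 0 < p₁) (hp₂ : 0 < p₂) (q : ℝ) :
    c ^ q * μ {x | c < F x} ≤ 2 ^ p₁ * (c ^ (q - p₁) * ∫⁻ x, G x ^ p₁ ∂μ)
      + 2 ^ p₂ * (c ^ (q - p₂) * ∫⁻ x, H x ^ p₂ ∂μ) :=
  calc c ^ q * μ {x | c < F x}
      ≤ c ^ q * μ {x | c / 2 ≤ G x} + c ^ q * μ {x | c / 2 ≤ H x} := by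
        rw [← mul_add]; gcongr; exact meas_gt_le_add_meas_ge_half hFGH c
    _ ≤ _ := add_le_add (rpow_mul_meas_ge_half_le hG hc₀ hc hp₁ q)
        (rpow_mul_meas_ge_half_le hH hc₀ hc hp₂ q)

end WeakType

/-- Abstract Chebyshev-plus-optimization step: if for every `N ∈ ℤ` one can split
`F ≤ G + H` with `∫ G^{q₁} ≤ C₁^{q₁} 2^{N q₁ (1/q₁ - 1/q)}` and
`∫ H^{q₂} ≤ C₂^{q₂} 2^{-N q₂ (1/q - 1/q₂)}`, then `F` lies in weak `L^q`, with a
constant depending only on `C₁, C₂, q, q₁, q₂`. -/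
theorem weak_Lq_from_dyadic_splitting (q₁ q q₂ : ℝ) (hq₁ : 1 ≤ q₁) (h₁ : q₁ < q)
    (h₂ : q < q₂) (C₁ C₂ : ℝ≥0∞) (hC₁ : C₁ ≠ ∞) (hC₂ : C₂ ≠ ∞) :
    ∃ C : ℝ≥0∞, C ≠ ∞ ∧
      ∀ (X : Type) (_ : MeasurableSpace X) (μ : Measure X) (F : X → ℝ≥0∞),
        Measurable F →
        (∀ N : ℤ, ∃ G H : X → ℝ≥0∞, Measurable G ∧ Measurable H ∧
          (∀ x, F x ≤ G x + H x) ∧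
          (∫⁻ x, (G x) ^ q₁ ∂μ) ≤ C₁ ^ q₁ * (2 : ℝ≥0∞) ^ ((N : ℝ) * q₁ * (1/q₁ - 1/q)) ∧
          (∫⁻ x, (H x) ^ q₂ ∂μ) ≤ C₂ ^ q₂ * (2 : ℝ≥0∞) ^ (-(N : ℝ) * q₂ * (1/q - 1/q₂))) →
        ∀ lam : ℝ≥0∞, 0 < lam →
          lam * (μ {x | lam < F x}) ^ (1/q) ≤ C := by
  have hq₁₀ : 0 < q₁ := by linarith
  have hq₀ : 0 < q := by linarith
  have hq₂₀ : 0 < q₂ := by linarith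
  have hs₁ : 0 ≤ 1 - q₁ / q := by rw [sub_nonneg, div_le_one hq₀]; exact h₁.le
  have hs₂ : 0 ≤ q₂ / q - 1 := by rw [sub_nonneg, one_le_div hq₀]; exact h₂.le
  refine ⟨(2 ^ q₁ * C₁ ^ q₁ + 2 ^ q₂ * (C₂ ^ q₂ * 2 ^ (q₂ / q - 1))) ^ (1 / q),
    ENNReal.rpow_ne_top_of_nonneg (by positivity) ?_, fun X _ μ F _ hsplit lam hlam ↦ ?_⟩
  · simp [ENNReal.mul_eq_top, ENNReal.rpow_eq_top_iff, hC₁, hC₂, hq₁₀.le, hq₂₀.le]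
  rcases eq_or_ne lam ∞ with rfl | hlam_top
  · simp [hq₀]
  obtain ⟨N, hN, hN'⟩ := ENNReal.exists_mul_two_zpow_le_one_and_inv_mul_two_zpow_neg_le_two
    (ENNReal.rpow_pos hlam hlam_top).ne' (ENNReal.rpow_ne_top_of_nonneg hq₀.le hlam_top)
  obtain ⟨G, H, hG, hH, hFGH, hIG, hIH⟩ := hsplit N
  have hdyadic₁ : lam ^ (q - q₁) * 2 ^ ((N : ℝ) * q₁ * (1 / q₁ - 1 / q)) ≤ 1 := by
    rw [← ENNReal.one_rpow (1 - q₁ / q)]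
    convert ENNReal.rpow_mul_mul_two_rpow_le_rpow hN hs₁ using 3 <;> field_simp
  have hdyadic₂ :
      lam ^ (q - q₂) * 2 ^ (-(N : ℝ) * q₂ * (1 / q - 1 / q₂)) ≤ 2 ^ (q₂ / q - 1) := by
    rw [← ENNReal.rpow_neg] at hN'
    convert ENNReal.rpow_mul_mul_two_rpow_le_rpow hN' hs₂ using 3
    · field_simp
      ring
    · push_cast
      field_simp
  refine ENNReal.mul_rpow_one_div_le_of_rpow_mul_le hq₀ <|
    (rpow_mul_meas_gt_le_of_le_add hG hH hFGH hlam.ne' hlam_top hq₁₀ hq₂₀ q).trans ?_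
  gcongr 2 ^ q₁ * ?_ + 2 ^ q₂ * ?_
  · calc lam ^ (q - q₁) * ∫⁻ x, G x ^ q₁ ∂μ
        ≤ lam ^ (q - q₁) * (C₁ ^ q₁ * 2 ^ ((N : ℝ) * q₁ * (1 / q₁ - 1 / q))) := by gcongr
      _ ≤ C₁ ^ q₁ := by rw [mul_left_comm]; exact mul_le_of_le_one_right' hdyadic₁
  · calc lam ^ (q - q₂) * ∫⁻ x, H x ^ q₂ ∂μ
        ≤ lam ^ (q - q₂) * (C₂ ^ q₂ * 2 ^ (-(N : ℝ) * q₂ * (1 / q - 1 / q₂))) := by gcongr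
      _ ≤ C₂ ^ q₂ * 2 ^ (q₂ / q - 1) := by rw [mul_left_comm]; gcongr
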